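/- Let E be a row-finite graph. A ℤ-order-ideal I of M_E^{gr} is prime (for all ℤ-order-ideals N₁, N₂: N₁ ∩ N₂ ⊆ I implies N₁ ⊆ I or N₂ ⊆ I) if and only if for all a, b ∉ I there exist c ∉ I and integers n, m with ^n c ≤ a and ^m c ≤ b. -/

import Mathlib

set_option linter.unusedSectionVars false

/-- The algebraic preorder on a commutative monoid: `a ≤ b` iff `b = a + c` for some `c`. -/
def algLE {M : Type*} [AddCommMonoid M] (a b : M) : Prop := ∃ c, b = a + c

/-- A row-finite directed graph: vertices `V`, edges `Ed`, source `s`, range `r`,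
and for each vertex the (finite) set of edges it emits. -/
structure RFGraph (V : Type) (Ed : Type) where
  s : Ed → V
  r : Ed → V
  emit : V → Finset Ed
  mem_emit : ∀ e v, e ∈ emit v ↔ s e = v

namespace RFGraph

variable {V Ed : Type} [DecidableEq V] (G : RFGraph V Ed)

/-- The one-step rewriting relation `→₁` on the free commutative monoid `Multiset V`:
replace one occurrence of a non-sink vertex `v` by the sum of ranges of edges emitted by `v`. -/
def Step1 (a b : Multiset V) : Prop :=
  ∃ v : V, v ∈ a ∧ G.emit v ≠ ∅ ∧ b = a.erase v + (G.emit v).val.map G.r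

/-- The reflexive-transitive closure `→` of `→₁`. -/
def Step : Multiset V → Multiset V → Prop := Relation.ReflTransGen G.Step1

/-- The congruence on the free commutative monoid generated by `→₁`. -/
def gcon : AddCon (Multiset V) := addConGen G.Step1

/-- The graph monoid `M_E`. -/
def GM := G.gcon.Quotient

instance : AddCommMonoid G.GM := inferInstanceAs (AddCommMonoid G.gcon.Quotient)

/-- One-step rewriting for the talented monoid: replace `v(i)` by `Σ_{e ∈ s⁻¹(v)} r(e)(i+1)`. -/
def TStep1 (a b : Multiset (V × ℤ)) : Prop :=
  ∃ (v : V) (i : ℤ), (v, i) ∈ a ∧ G.emit v ≠ ∅ ∧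
    b = a.erase (v, i) + (G.emit v).val.map (fun e => (G.r e, i + 1))

/-- The congruence generated by the talented one-step relation. -/
def tcon : AddCon (Multiset (V × ℤ)) := addConGen G.TStep1

/-- The talented monoid `M_E^{gr}`. -/
def TM := G.tcon.Quotient

instance : AddCommMonoid G.TM := inferInstanceAs (AddCommMonoid G.tcon.Quotient)

/-- The generator `v(i)` of the talented monoid. -/
def tgen (v : V) (i : ℤ) : G.TM := G.tcon.mk' {(v, i)}

/-- The shift `v(i) ↦ v(i+n)` on the free commutative monoid `Multiset (V × ℤ)`. -/
def shiftMul (n : ℤ) : Multiset (V × ℤ) →+ Multiset (V × ℤ) where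
  toFun a := a.map fun p => (p.1, p.2 + n)
  map_zero' := rfl
  map_add' a b := Multiset.map_add (fun p => (p.1, p.2 + n)) a b

lemma shift_inj (n : ℤ) : Function.Injective (fun p : V × ℤ => (p.1, p.2 + n)) := by
  rintro ⟨a, b⟩ ⟨c, d⟩ h
  simp only [Prod.mk.injEq] at h
  exact Prod.ext h.1 (by omega)

lemma tstep1_shift (n : ℤ) {a b : Multiset (V × ℤ)} (h : G.TStep1 a b) :
    G.TStep1 (shiftMul n a) (shiftMul n b) := by
  obtain ⟨v, i, hv, hne, rfl⟩ := h
  refine ⟨v, i + n, Multiset.mem_map.2 ⟨(v, i), hv, rfl⟩, hne, ?_⟩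
  show Multiset.map _ _ = _
  rw [Multiset.map_add]
  congr 1
  · exact (Multiset.map_erase _ (shift_inj n) (v, i) a)
  · rw [Multiset.map_map]
    congr 1
    funext e
    simp only [Function.comp_apply]
    congr 1
    omega

lemma tcon_shift (n : ℤ) {a b : Multiset (V × ℤ)} (h : G.tcon a b) :
    G.tcon (shiftMul n a) (shiftMul n b) := by
  have hle : addConGen G.TStep1 ≤
      { r := fun a b => G.tcon (shiftMul n a) (shiftMul n b)
        iseqv := ⟨fun _ => G.tcon.refl _, fun h => G.tcon.symm h,
          fun h₁ h₂ => G.tcon.trans h₁ h₂⟩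
        add' := fun h₁ h₂ => by
          simpa only [map_add] using G.tcon.add h₁ h₂ } := by
    refine AddCon.addConGen_le.2 ?_
    intro x y hxy
    exact AddConGen.Rel.of _ _ (G.tstep1_shift n hxy)
  exact hle h

/-- The `ℤ`-action on the talented monoid, `ⁿ(v(i)) = v(i+n)`. -/
def tshift (n : ℤ) : G.TM →+ G.TM :=
  G.tcon.lift (G.tcon.mk'.comp (shiftMul n)) (by
    intro a b h
    show G.tcon.mk' (shiftMul n a) = G.tcon.mk' (shiftMul n b)
    exact (AddCon.eq _).2 (G.tcon_shift n h))

/-- Reachability: there is a (possibly trivial) path from `u` to `v`. -/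
def Reaches (u v : V) : Prop :=
  Relation.ReflTransGen (fun a b => ∃ e : Ed, G.s e = a ∧ G.r e = b) u v

/-- A cycle: a nonempty path of edges, closed up, with distinct source vertices. -/
def IsCycle (p : List Ed) : Prop :=
  ∃ h : p ≠ [], List.Chain' (fun e f => G.r e = G.s f) p ∧
    G.r (p.getLast h) = G.s (p.head h) ∧ (p.map G.s).Nodup

/-- The cycle `p` has an exit: some vertex on it emits an edge not on the cycle. -/
def HasExit (p : List Ed) : Prop :=
  ∃ e : Ed, (∃ f ∈ p, G.s e = G.s f) ∧ e ∉ p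

/-- The cycle `p` has no exit: every vertex on it emits exactly its cycle edge. -/
def NoExit (p : List Ed) : Prop :=
  ∀ e ∈ p, G.emit (G.s e) = {e}

/-- `ℤ`-order-ideals of the talented monoid. -/
def IsOrderIdeal (I : Set G.TM) : Prop :=
  (0 : G.TM) ∈ I ∧ (∀ a b : G.TM, a ∈ I → b ∈ I → a + b ∈ I) ∧
    (∀ (n : ℤ) (a : G.TM), a ∈ I → G.tshift n a ∈ I) ∧
    (∀ a b : G.TM, algLE a b → b ∈ I → a ∈ I)

/-- The smallest `ℤ`-order-ideal of `M_E^{gr}` containing `v(0)`. -/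
def genIdeal (v : V) : Set G.TM :=
  ⋂₀ {I : Set G.TM | G.IsOrderIdeal I ∧ G.tgen v 0 ∈ I}

/-- Minimality in the talented monoid: `0 ≠ b ≤ a` implies `a ≤ b`. -/
def TMin (a : G.TM) : Prop := ∀ b : G.TM, b ≠ 0 → algLE b a → algLE a b

/-- The covering graph `\bar E`. -/
def cover : RFGraph (V × ℤ) (Ed × ℤ) where
  s p := (G.s p.1, p.2)
  r p := (G.r p.1, p.2 + 1)
  emit p := (G.emit p.1).map ⟨fun e => (e, p.2), fun a b h => by
    simpa using congrArg Prod.fst h⟩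
  mem_emit := by
    rintro ⟨e, n⟩ ⟨v, m⟩
    simp only [Finset.mem_map, Function.Embedding.coeFn_mk, Prod.mk.injEq, G.mem_emit]
    constructor
    · rintro ⟨a, ha, rfl, rfl⟩; exact ⟨ha, rfl⟩
    · rintro ⟨rfl, rfl⟩; exact ⟨e, by simp, rfl⟩

/-- The set of vertices on a cycle. -/
def cycVerts (p : List Ed) : Set V := {v | ∃ e ∈ p, G.s e = v}

end RFGraph

/-! Rewriting `v(i) ↦ Σ_{s(e) = v} r(e)(i+1)` on multisets is confluent and can be run
separately on the summands of a sum, so `M_E^{gr}` has Riesz refinement: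
`p ≤ q + r` forces `p = p₁ + p₂` with `p₁ ≤ q`, `p₂ ≤ r`.
An element of the ideal generated by `I` and `a` lies below `y + Σ ⁿⁱa` with `y ∈ I`,
so refinement extracts from any such element outside `I` a piece outside `I` some shift of
which lies below `a`. If `I` is prime, the ideals generated by `I, a` and by `I, b` share an
element outside `I`, and extracting twice gives `c`. Conversely, an element `c` as in the
condition lies in every hereditary shift-invariant ideal containing `a`, resp. `b`. -/

section algLE

variable {M N : Type*} [AddCommMonoid M] [AddCommMonoid N]

lemma algLE_refl (a : M) : algLE a a := ⟨0, (add_zero a).symm⟩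

lemma algLE_trans {a b c : M} (hab : algLE a b) (hbc : algLE b c) : algLE a c := by
  obtain ⟨x, rfl⟩ := hab
  obtain ⟨y, rfl⟩ := hbc
  exact ⟨x + y, add_assoc a x y⟩

lemma algLE_add {a b c d : M} (hab : algLE a b) (hcd : algLE c d) :
    algLE (a + c) (b + d) := by
  obtain ⟨x, rfl⟩ := hab
  obtain ⟨y, rfl⟩ := hcd
  exact ⟨x + y, add_add_add_comm a x c y⟩

lemma algLE_map (f : M →+ N) {a b : M} (h : algLE a b) : algLE (f a) (f b) := by
  obtain ⟨x, rfl⟩ := h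
  exact ⟨f x, map_add f a x⟩

lemma algLE_add_right (a b : M) : algLE a (a + b) := ⟨b, rfl⟩

lemma algLE_add_left (a b : M) : algLE b (a + b) := ⟨a, add_comm a b⟩

end algLE

lemma Multiset.exists_add_of_le_add {α : Type*} [DecidableEq α] {s t u : Multiset α}
    (h : s ≤ t + u) : ∃ t' u', t' ≤ t ∧ u' ≤ u ∧ s = t' + u' :=
  ⟨s ∩ t, s - t, Multiset.inter_le_right, tsub_le_iff_left.2 h,
    by rw [add_comm, Multiset.sub_add_inter]⟩

namespace RFGraph

variable {V Ed : Type} [DecidableEq V] (G : RFGraph V Ed)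

section Rewriting

def TStep : Multiset (V × ℤ) → Multiset (V × ℤ) → Prop := Relation.ReflTransGen G.TStep1

variable {G}

lemma tstep1_add_right {a b : Multiset (V × ℤ)} (t : Multiset (V × ℤ)) (h : G.TStep1 a b) :
    G.TStep1 (a + t) (b + t) := by
  obtain ⟨v, i, hv, hne, rfl⟩ := h
  refine ⟨v, i, Multiset.mem_add.2 (Or.inl hv), hne, ?_⟩
  rw [Multiset.erase_add_left_pos t hv, add_right_comm]

lemma tstep_add {a b c d : Multiset (V × ℤ)} (hab : G.TStep a b) (hcd : G.TStep c d) :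
    G.TStep (a + c) (b + d) := by
  refine (hab.lift (· + c) fun _ _ h => tstep1_add_right c h).trans ?_
  refine hcd.lift (b + ·) fun x y h => ?_
  simpa only [add_comm b] using tstep1_add_right b h

lemma tstep1_diamond {a b c : Multiset (V × ℤ)} (hb : G.TStep1 a b) (hc : G.TStep1 a c) :
    ∃ d, Relation.ReflGen G.TStep1 b d ∧ G.TStep c d := by
  obtain ⟨v, i, hv, hvne, rfl⟩ := hb
  obtain ⟨w, j, hw, hwne, rfl⟩ := hc
  by_cases hvw : (v, i) = (w, j)
  · obtain ⟨rfl, rfl⟩ := Prod.mk.injEq .. ▸ hvw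
    exact ⟨_, .refl, .refl⟩
  have hw' : (w, j) ∈ a.erase (v, i) := (Multiset.mem_erase_of_ne (Ne.symm hvw)).2 hw
  have hv' : (v, i) ∈ a.erase (w, j) := (Multiset.mem_erase_of_ne hvw).2 hv
  refine ⟨(a.erase (v, i)).erase (w, j) + (G.emit v).val.map (fun e => (G.r e, i + 1))
    + (G.emit w).val.map (fun e => (G.r e, j + 1)), ?_, ?_⟩
  · refine .single ⟨w, j, Multiset.mem_add.2 (Or.inl hw'), hwne, ?_⟩
    rw [Multiset.erase_add_left_pos _ hw']
  · refine .single ⟨v, i, Multiset.mem_add.2 (Or.inl hv'), hvne, ?_⟩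
    rw [Multiset.erase_add_left_pos _ hv', Multiset.erase_comm, add_right_comm]

lemma tstep_confluent {a b c : Multiset (V × ℤ)} (hb : G.TStep a b) (hc : G.TStep a c) :
    ∃ d, G.TStep b d ∧ G.TStep c d :=
  Relation.church_rosser (fun _ _ _ => tstep1_diamond) hb hc

lemma tcon_of_tstep {a b : Multiset (V × ℤ)} (h : G.TStep a b) : G.tcon a b := by
  induction h with
  | refl => exact G.tcon.refl _
  | tail _ hstep ih => exact G.tcon.trans ih (AddConGen.Rel.of _ _ hstep)

lemma mk'_eq_of_tstep {a b : Multiset (V × ℤ)} (h : G.TStep a b) :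
    G.tcon.mk' a = G.tcon.mk' b :=
  (AddCon.eq _).2 (tcon_of_tstep h)

lemma exists_tstep_of_tcon {a b : Multiset (V × ℤ)} (h : G.tcon a b) :
    ∃ d, G.TStep a d ∧ G.TStep b d := by
  let joinable : AddCon (Multiset (V × ℤ)) :=
    { r := fun a b => ∃ d, G.TStep a d ∧ G.TStep b d
      iseqv := by
        refine ⟨fun x => ⟨x, .refl, .refl⟩, ?_, ?_⟩
        · rintro x y ⟨d, hxd, hyd⟩
          exact ⟨d, hyd, hxd⟩
        · rintro x y z ⟨d, hxd, hyd⟩ ⟨e, hye, hze⟩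
          obtain ⟨f, hdf, hef⟩ := tstep_confluent hyd hye
          exact ⟨f, hxd.trans hdf, hze.trans hef⟩
      add' := by
        rintro w x y z ⟨d, hwd, hxd⟩ ⟨e, hye, hze⟩
        exact ⟨d + e, tstep_add hwd hye, tstep_add hxd hze⟩ }
  exact (AddCon.addConGen_le (c := joinable)).2 (fun x y hxy => ⟨y, .single hxy, .refl⟩) h

lemma exists_split_of_tstep {a w : Multiset (V × ℤ)} (h : G.TStep a w) :
    ∀ x y, a = x + y → ∃ w₁ w₂, w = w₁ + w₂ ∧ G.TStep x w₁ ∧ G.TStep y w₂ := by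
  induction h using Relation.ReflTransGen.head_induction_on with
  | refl => exact fun x y h => ⟨x, y, h, .refl, .refl⟩
  | head hstep _ ih =>
    rintro x y rfl
    obtain ⟨v, i, hv, hne, rfl⟩ := hstep
    rcases Multiset.mem_add.1 hv with hvx | hvy
    · obtain ⟨w₁, w₂, rfl, h₁, h₂⟩ :=
        ih (x.erase (v, i) + (G.emit v).val.map (fun e => (G.r e, i + 1))) y
          (by rw [Multiset.erase_add_left_pos _ hvx, add_right_comm])
      exact ⟨w₁, w₂, rfl, .head ⟨v, i, hvx, hne, rfl⟩ h₁, h₂⟩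
    · obtain ⟨w₁, w₂, rfl, h₁, h₂⟩ :=
        ih x (y.erase (v, i) + (G.emit v).val.map (fun e => (G.r e, i + 1)))
          (by rw [Multiset.erase_add_right_pos _ hvy, add_assoc])
      exact ⟨w₁, w₂, rfl, h₁, .head ⟨v, i, hvy, hne, rfl⟩ h₂⟩

lemma algLE_mk'_of_le {a b : Multiset (V × ℤ)} (h : a ≤ b) :
    algLE (G.tcon.mk' a) (G.tcon.mk' b) := by
  obtain ⟨u, rfl⟩ := Multiset.le_iff_exists_add.1 h
  exact ⟨G.tcon.mk' u, map_add _ _ _⟩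

lemma exists_add_of_algLE_add {p q r : G.TM} (h : algLE p (q + r)) :
    ∃ p₁ p₂, p = p₁ + p₂ ∧ algLE p₁ q ∧ algLE p₂ r := by
  obtain ⟨c, rfl⟩ := AddCon.mk'_surjective p
  obtain ⟨x, rfl⟩ := AddCon.mk'_surjective q
  obtain ⟨y, rfl⟩ := AddCon.mk'_surjective r
  obtain ⟨z, hz⟩ := h
  obtain ⟨d, rfl⟩ := AddCon.mk'_surjective z
  have hcon : G.tcon (c + d) (x + y) := (AddCon.eq _).1 <|
    show G.tcon.mk' (c + d) = G.tcon.mk' (x + y) by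
      rw [map_add, map_add]
      exact hz.symm
  obtain ⟨w, hcdw, hxyw⟩ := exists_tstep_of_tcon hcon
  obtain ⟨wc, wd, rfl, hcwc, -⟩ := exists_split_of_tstep hcdw c d rfl
  obtain ⟨wx, wy, hw, hxwx, hywy⟩ := exists_split_of_tstep hxyw x y rfl
  obtain ⟨u₁, u₂, hu₁, hu₂, rfl⟩ :=
    Multiset.exists_add_of_le_add (hw ▸ Multiset.le_add_right _ _ : wc ≤ wx + wy)
  refine ⟨G.tcon.mk' u₁, G.tcon.mk' u₂, ?_, ?_, ?_⟩
  · exact (mk'_eq_of_tstep hcwc).trans (map_add _ _ _)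
  · rw [mk'_eq_of_tstep hxwx]
    exact algLE_mk'_of_le hu₁
  · rw [mk'_eq_of_tstep hywy]
    exact algLE_mk'_of_le hu₂

end Rewriting

section Shift

lemma shiftMul_shiftMul (m n : ℤ) (a : Multiset (V × ℤ)) :
    shiftMul m (shiftMul n a) = shiftMul (n + m) a := by
  change Multiset.map _ (Multiset.map _ a) = Multiset.map _ a
  rw [Multiset.map_map]
  exact Multiset.map_congr rfl fun p _ => by simp [add_assoc]

lemma tshift_mk' (n : ℤ) (a : Multiset (V × ℤ)) :
    G.tshift n (G.tcon.mk' a) = G.tcon.mk' (shiftMul n a) :=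
  AddCon.lift_mk' _ _

lemma tshift_tshift (m n : ℤ) (x : G.TM) :
    G.tshift m (G.tshift n x) = G.tshift (n + m) x := by
  obtain ⟨a, rfl⟩ := AddCon.mk'_surjective x
  rw [G.tshift_mk', G.tshift_mk', G.tshift_mk', shiftMul_shiftMul]

lemma tshift_zero (x : G.TM) : G.tshift 0 x = x := by
  obtain ⟨a, rfl⟩ := AddCon.mk'_surjective x
  rw [G.tshift_mk']
  congr 1
  exact Multiset.map_congr rfl (fun p _ => by simp) |>.trans (Multiset.map_id a)

lemma tshift_neg_tshift (n : ℤ) (x : G.TM) : G.tshift (-n) (G.tshift n x) = x := by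
  rw [tshift_tshift, add_neg_cancel, tshift_zero]

lemma algLE_tshift_neg {n : ℤ} {x y : G.TM} (h : algLE x (G.tshift n y)) :
    algLE (G.tshift (-n) x) y :=
  G.tshift_neg_tshift n y ▸ algLE_map (G.tshift (-n)) h

end Shift

namespace IsOrderIdeal

variable {G} {I : Set G.TM}

lemma add_mem (hI : G.IsOrderIdeal I) {a b : G.TM} (ha : a ∈ I) (hb : b ∈ I) : a + b ∈ I :=
  hI.2.1 a b ha hb

lemma tshift_mem (hI : G.IsOrderIdeal I) (n : ℤ) {a : G.TM} (ha : a ∈ I) : G.tshift n a ∈ I :=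
  hI.2.2.1 n a ha

lemma mem_of_algLE (hI : G.IsOrderIdeal I) {a b : G.TM} (hab : algLE a b) (hb : b ∈ I) :
    a ∈ I :=
  hI.2.2.2 a b hab hb

lemma mem_of_tshift_algLE (hI : G.IsOrderIdeal I) {n : ℤ} {a c : G.TM}
    (hca : algLE (G.tshift n c) a) (ha : a ∈ I) : c ∈ I :=
  G.tshift_neg_tshift n c ▸ hI.tshift_mem (-n) (hI.mem_of_algLE hca ha)

end IsOrderIdeal

section IdealInsert

variable {G}

lemma tshift_multiset_sum (k : ℤ) (a : G.TM) (s : Multiset ℤ) :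
    G.tshift k (s.map (G.tshift · a)).sum = ((s.map (· + k)).map (G.tshift · a)).sum := by
  rw [map_multiset_sum, Multiset.map_map, Multiset.map_map]
  exact congrArg _ (Multiset.map_congr rfl fun n _ => G.tshift_tshift k n a)

variable (G)

/-- The `ℤ`-order-ideal generated by `I ∪ {a}`, when `I` is a `ℤ`-order-ideal. -/
def idealInsert (I : Set G.TM) (a : G.TM) : Set G.TM :=
  {x | ∃ y ∈ I, ∃ s : Multiset ℤ, algLE x (y + (s.map (G.tshift · a)).sum)}

variable {G} {I : Set G.TM}

lemma mem_idealInsert_self (hI : G.IsOrderIdeal I) (a : G.TM) : a ∈ G.idealInsert I a :=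
  ⟨0, hI.1, {0}, by simpa only [Multiset.map_singleton, Multiset.sum_singleton, G.tshift_zero,
    zero_add] using algLE_refl a⟩

lemma isOrderIdeal_idealInsert (hI : G.IsOrderIdeal I) (a : G.TM) :
    G.IsOrderIdeal (G.idealInsert I a) := by
  refine ⟨⟨0, hI.1, 0, by
    simpa only [Multiset.map_zero, Multiset.sum_zero, add_zero] using algLE_refl (0 : G.TM)⟩, ?_, ?_, ?_⟩
  · rintro x₁ x₂ ⟨y₁, hy₁, s₁, h₁⟩ ⟨y₂, hy₂, s₂, h₂⟩
    refine ⟨y₁ + y₂, hI.add_mem hy₁ hy₂, s₁ + s₂, ?_⟩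
    rw [Multiset.map_add, Multiset.sum_add, add_add_add_comm]
    exact algLE_add h₁ h₂
  · rintro k x ⟨y, hy, s, h⟩
    refine ⟨G.tshift k y, hI.tshift_mem k hy, s.map (· + k), ?_⟩
    simpa only [map_add, tshift_multiset_sum] using algLE_map (G.tshift k) h
  · rintro x x' hxx' ⟨y, hy, s, h⟩
    exact ⟨y, hy, s, algLE_trans hxx' h⟩

lemma exists_tshift_algLE_of_mem_idealInsert (hI : G.IsOrderIdeal I) {a c : G.TM}
    (hc : c ∈ G.idealInsert I a) (hcI : c ∉ I) :
    ∃ d ∉ I, algLE d c ∧ ∃ n, algLE (G.tshift n d) a := by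
  obtain ⟨y, hy, s, hcs⟩ := hc
  induction s using Multiset.induction generalizing c y with
  | empty =>
    exact absurd (hI.mem_of_algLE (by simpa only [Multiset.map_zero, Multiset.sum_zero,
      add_zero] using hcs) hy) hcI
  | cons n s ih =>
    rw [Multiset.map_cons, Multiset.sum_cons, add_left_comm] at hcs
    obtain ⟨u, w, rfl, hu, hw⟩ := exists_add_of_algLE_add hcs
    by_cases huI : u ∈ I
    · obtain ⟨d, hdI, hdw, m, hm⟩ := ih (fun hwI => hcI (hI.add_mem huI hwI)) y hy hw
      exact ⟨d, hdI, algLE_trans hdw (algLE_add_left u w), m, hm⟩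
    · exact ⟨u, huI, algLE_add_right u w, -n, G.algLE_tshift_neg hu⟩

end IdealInsert

end RFGraph

/-- A `ℤ`-order-ideal `I` of `M_E^{gr}` is prime if and only if for all `a, b ∉ I`
there exist `c ∉ I` and integers `n, m` with `ⁿc ≤ a` and `ᵐc ≤ b`. -/
theorem prime_iff {V Ed : Type} [DecidableEq V] (G : RFGraph V Ed)
    (I : Set G.TM) (hI : G.IsOrderIdeal I) :
    (∀ N₁ N₂ : Set G.TM, G.IsOrderIdeal N₁ → G.IsOrderIdeal N₂ →
        N₁ ∩ N₂ ⊆ I → N₁ ⊆ I ∨ N₂ ⊆ I) ↔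
      ∀ a b : G.TM, a ∉ I → b ∉ I →
        ∃ c : G.TM, c ∉ I ∧ ∃ n m : ℤ,
          algLE (G.tshift n c) a ∧ algLE (G.tshift m c) b := by
  constructor
  · intro hprime a b ha hb
    obtain ⟨c, ⟨hca, hcb⟩, hcI⟩ : ∃ c ∈ G.idealInsert I a ∩ G.idealInsert I b, c ∉ I := by
      refine Set.not_subset.1 fun hsub => ?_
      rcases hprime _ _ (G.isOrderIdeal_idealInsert hI a) (G.isOrderIdeal_idealInsert hI b)
        hsub with hIa | hIb
      exacts [ha (hIa (G.mem_idealInsert_self hI a)), hb (hIb (G.mem_idealInsert_self hI b))]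
    obtain ⟨d, hdI, hdc, n, hda⟩ := RFGraph.exists_tshift_algLE_of_mem_idealInsert hI hca hcI
    have hdb : d ∈ G.idealInsert I b := (G.isOrderIdeal_idealInsert hI b).mem_of_algLE hdc hcb
    obtain ⟨e, heI, hed, m, heb⟩ := RFGraph.exists_tshift_algLE_of_mem_idealInsert hI hdb hdI
    exact ⟨e, heI, n, m, algLE_trans (algLE_map (G.tshift n) hed) hda, heb⟩
  · intro hcond N₁ N₂ hN₁ hN₂ hsub
    refine or_iff_not_imp_left.2 fun hN₁I b hbN => ?_
    by_contra hbI
    obtain ⟨a, haN, haI⟩ := Set.not_subset.1 hN₁I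
    obtain ⟨c, hcI, n, m, hca, hcb⟩ := hcond a b haI hbI
    exact hcI (hsub ⟨hN₁.mem_of_tshift_algLE hca haN, hN₂.mem_of_tshift_algLE hcb hbN⟩)
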